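/- Let λ ∈ Δ_N, ν = (ν₁,…,ν_N) ∈ 𝒫₁(ℝ)^N, θ ∈ [0,1], and ν^θ := VMed_λ(θ,ν). If ν₁,…,ν_N are all absolutely continuous with respect to Lebesgue measure with densities f₁,…,f_N ∈ L¹(ℝ), then ν^θ is absolutely continuous with a density f satisfying min_{1≤i≤N} fᵢ ≤ f ≤ max_{1≤i≤N} fᵢ almost everywhere on ℝ. In particular, if fᵢ ∈ L^p(ℝ) for all i for some p ∈ [1,∞], then f ∈ L^p(ℝ) and ‖min_i fᵢ‖_{L^p} ≤ ‖f‖_{L^p} ≤ ‖max_i fᵢ‖_{L^p} ≤ ∑ᵢ ‖fᵢ‖_{L^p}. -/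

import Mathlib

open MeasureTheory Filter Topology
open scoped ENNReal NNReal

/-- The set of couplings (transport plans): Borel probability measures on `X × X`
with first marginal `μ` and second marginal `ν`. -/
def Couplings {X : Type*} [MeasurableSpace X] (μ ν : Measure X) :
    Set (Measure (X × X)) :=
  {γ | IsProbabilityMeasure γ ∧ γ.map Prod.fst = μ ∧ γ.map Prod.snd = ν}

/-- The Wasserstein distance of order `1` between two measures on a metric space:
the infimum over couplings `γ` of `∫ d(x,y) dγ`. -/
noncomputable def W1 {X : Type*} [MetricSpace X] [MeasurableSpace X]
    (μ ν : Measure X) : ℝ :=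
  (⨅ γ ∈ Couplings μ ν, ∫⁻ p, edist p.1 p.2 ∂γ).toReal

/-- `𝒫₁(X)`: Borel probability measures on `X` with finite first moment. -/
def P1 (X : Type*) [MetricSpace X] [MeasurableSpace X] : Set (Measure X) :=
  {μ | IsProbabilityMeasure μ ∧ ∀ x₀ : X, Integrable (fun x => dist x₀ x) μ}

/-- `λ` belongs to the simplex `Δ_N`: nonnegative weights summing to `1`. -/
def memSimplex {N : ℕ} (l : Fin N → ℝ) : Prop :=
  (∀ i, 0 ≤ l i) ∧ ∑ i, l i = 1

/-- The dispersion functional `μ ↦ ∑ᵢ λᵢ W₁(νᵢ, μ)`. -/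
noncomputable def medCost {X : Type*} [MetricSpace X] [MeasurableSpace X] {N : ℕ}
    (l : Fin N → ℝ) (ν : Fin N → Measure X) (μ : Measure X) : ℝ :=
  ∑ i, l i * W1 (ν i) μ

/-- The set of Wasserstein medians of `ν₁, …, ν_N` with weights `λ`:
minimizers over `𝒫₁(X)` of the dispersion functional. -/
def Med {X : Type*} [MetricSpace X] [MeasurableSpace X] {N : ℕ}
    (l : Fin N → ℝ) (ν : Fin N → Measure X) : Set (Measure X) :=
  {μ | μ ∈ P1 X ∧ ∀ ρ ∈ P1 X, medCost l ν μ ≤ medCost l ν ρ}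
/-- The total weight of the indices `i` with `xᵢ ≤ y`. -/
noncomputable def sumWeightLe {N : ℕ} (l x : Fin N → ℝ) (y : ℝ) : ℝ :=
  ∑ i ∈ Finset.univ.filter (fun i => x i ≤ y), l i

/-- The total weight of the indices `i` with `xᵢ < y`. -/
noncomputable def sumWeightLt {N : ℕ} (l x : Fin N → ℝ) (y : ℝ) : ℝ :=
  ∑ i ∈ Finset.univ.filter (fun i => x i < y), l i

/-- The lower weighted median `m⁻_λ(x) = inf {y : ∑_{i : xᵢ ≤ y} λᵢ ≥ 1/2}`. -/
noncomputable def mMinus {N : ℕ} (l x : Fin N → ℝ) : ℝ :=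
  sInf {y : ℝ | 1 / 2 ≤ sumWeightLe l x y}

/-- The upper weighted median `m⁺_λ(x) = sup {y : ∑_{i : xᵢ < y} λᵢ ≤ 1/2}`. -/
noncomputable def mPlus {N : ℕ} (l x : Fin N → ℝ) : ℝ :=
  sSup {y : ℝ | sumWeightLt l x y ≤ 1 / 2}

/-- The cumulative distribution function `F_ν(x) = ν((−∞, x])` of a measure on `ℝ`. -/
noncomputable def cdf (μ : Measure ℝ) (x : ℝ) : ℝ :=
  (μ (Set.Iic x)).toReal

/-- The quantile (pseudo-inverse) function `Q_ν(t) = inf {x : F_ν(x) ≥ t}`. -/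
noncomputable def quantile (μ : Measure ℝ) (t : ℝ) : ℝ :=
  sInf {x : ℝ | t ≤ cdf μ x}


section VSelHelpers

open Set

private lemma vsel_mMinus_le_add {N : ℕ} (hN : 1 ≤ N) {l : Fin N → ℝ} (hl : memSimplex l)
    {x y : Fin N → ℝ} {c : ℝ} (h : ∀ i, y i ≤ x i + c) :
    mMinus l y ≤ mMinus l x + c := by
  have hne : Nonempty (Fin N) := Fin.pos_iff_nonempty.mp hN
  have hU : (Finset.univ : Finset (Fin N)).Nonempty := Finset.univ_nonempty
  set t0 := Finset.univ.sup' hU x with ht0def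
  have ht0 : (1:ℝ)/2 ≤ sumWeightLe l x t0 := by
    unfold sumWeightLe
    have hfil : Finset.univ.filter (fun i => x i ≤ t0) = Finset.univ := by
      ext i; simp only [Finset.mem_filter, Finset.mem_univ, true_and, iff_true]; exact Finset.le_sup' x (Finset.mem_univ i)
    rw [hfil, hl.2]; norm_num
  have hbdd : BddBelow {t : ℝ | 1/2 ≤ sumWeightLe l y t} := by
    refine ⟨Finset.univ.inf' hU y, fun s hs => ?_⟩
    by_contra hlt
    push_neg at hlt
    have hz : sumWeightLe l y s = 0 := by
      unfold sumWeightLe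
      have hfil : Finset.univ.filter (fun i => y i ≤ s) = ∅ := by
        ext i
        simp only [Finset.mem_filter, Finset.mem_univ, true_and, Finset.notMem_empty,
          iff_false]
        intro h'
        exact absurd (le_trans (Finset.inf'_le y (Finset.mem_univ i)) h')
          (not_le.mpr hlt)
      rw [hfil, Finset.sum_empty]
    rw [Set.mem_setOf_eq, hz] at hs
    linarith
  rw [mMinus, mMinus, ← sub_le_iff_le_add]
  refine le_csInf (s := {t : ℝ | 1/2 ≤ sumWeightLe l x t}) ⟨t0, ht0⟩ fun t ht => ?_
  rw [sub_le_iff_le_add]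
  apply csInf_le hbdd
  show (1:ℝ)/2 ≤ sumWeightLe l y (t + c)
  refine le_trans ht (Finset.sum_le_sum_of_subset_of_nonneg ?_ (fun i _ _ => hl.1 i))
  intro i hi
  simp only [Finset.mem_filter, Finset.mem_univ, true_and] at hi ⊢
  linarith [h i]

private lemma vsel_mPlus_le_add {N : ℕ} (hN : 1 ≤ N) {l : Fin N → ℝ} (hl : memSimplex l)
    {x y : Fin N → ℝ} {c : ℝ} (h : ∀ i, y i ≤ x i + c) :
    mPlus l y ≤ mPlus l x + c := by
  have hne : Nonempty (Fin N) := Fin.pos_iff_nonempty.mp hN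
  have hU : (Finset.univ : Finset (Fin N)).Nonempty := Finset.univ_nonempty
  set t1 := Finset.univ.inf' hU y with ht1def
  have ht1 : sumWeightLt l y t1 ≤ 1/2 := by
    unfold sumWeightLt
    have hfil : Finset.univ.filter (fun i => y i < t1) = ∅ := by
      ext i
      simp only [Finset.mem_filter, Finset.mem_univ, true_and, Finset.notMem_empty, iff_false]
      exact not_lt.mpr (Finset.inf'_le y (Finset.mem_univ i))
    rw [hfil, Finset.sum_empty]; norm_num
  have hbddA : BddAbove {t : ℝ | sumWeightLt l x t ≤ 1/2} := by
    refine ⟨Finset.univ.sup' hU x + 1, fun s hs => ?_⟩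
    by_contra hlt
    push_neg at hlt
    have hone : sumWeightLt l x s = 1 := by
      unfold sumWeightLt
      have hfil : Finset.univ.filter (fun i => x i < s) = Finset.univ := by
        ext i
        simp only [Finset.mem_filter, Finset.mem_univ, true_and, iff_true]
        have := Finset.le_sup' x (Finset.mem_univ i)
        linarith
      rw [hfil, hl.2]
    rw [Set.mem_setOf_eq, hone] at hs
    linarith
  rw [mPlus, mPlus]
  refine csSup_le (s := {t : ℝ | sumWeightLt l y t ≤ 1/2}) ⟨t1, ht1⟩ fun t ht => ?_
  have hmem : t - c ∈ {t : ℝ | sumWeightLt l x t ≤ 1/2} := by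
    show sumWeightLt l x (t - c) ≤ 1/2
    refine le_trans (Finset.sum_le_sum_of_subset_of_nonneg ?_ (fun i _ _ => hl.1 i)) ht
    intro i hi
    simp only [Finset.mem_filter, Finset.mem_univ, true_and] at hi ⊢
    linarith [h i]
  have := le_csSup hbddA hmem
  linarith

private lemma vsel_cdf_nonneg (μ : Measure ℝ) (x : ℝ) : 0 ≤ cdf μ x := ENNReal.toReal_nonneg

private lemma vsel_cdf_mono (μ : Measure ℝ) [IsFiniteMeasure μ] : Monotone (cdf μ) :=
  fun _ _ hab =>
  ENNReal.toReal_mono (measure_ne_top μ _) (measure_mono (Set.Iic_subset_Iic.mpr hab))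

private lemma vsel_ofReal_cdf (μ : Measure ℝ) [IsFiniteMeasure μ] (x : ℝ) :
    ENNReal.ofReal (cdf μ x) = μ (Set.Iic x) := ENNReal.ofReal_toReal (measure_ne_top μ _)

private lemma vsel_cdf_add_Ioc (μ : Measure ℝ) [IsFiniteMeasure μ] {a b : ℝ} (hab : a ≤ b) :
    cdf μ b = cdf μ a + (μ (Set.Ioc a b)).toReal := by
  have : μ (Set.Iic b) = μ (Set.Iic a) + μ (Set.Ioc a b) := by
    rw [← measure_union (Set.Iic_disjoint_Ioc le_rfl) measurableSet_Ioc,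
      Set.Iic_union_Ioc_eq_Iic hab]
  rw [cdf, this, ENNReal.toReal_add (measure_ne_top μ _) (measure_ne_top μ _)]
  rfl

private lemma vsel_measure_Iic_iInf (μ : Measure ℝ) [IsFiniteMeasure μ] (x : ℝ) :
    ⨅ n : ℕ, μ (Set.Iic (x + 1 / (n + 1))) = μ (Set.Iic x) := by
  rw [← Directed.measure_iInter (fun n => measurableSet_Iic.nullMeasurableSet) ?_
    ⟨0, measure_ne_top μ _⟩]
  · congr 1
    ext y
    simp only [Set.mem_iInter, Set.mem_Iic]
    constructor
    · intro h
      by_contra hxy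
      push_neg at hxy
      obtain ⟨n, hn⟩ := exists_nat_gt (1 / (y - x))
      have hpos : (0:ℝ) < y - x := by linarith
      have h1 : 1 / (y - x) < (n:ℝ) + 1 := by
        calc 1 / (y - x) < n := hn
          _ ≤ n + 1 := by linarith
      have : 1 / ((n:ℝ) + 1) < y - x := by
        rw [div_lt_iff₀ (by positivity)]
        rw [div_lt_iff₀ hpos] at h1
        linarith
      have := h n
      linarith
    · intro h n
      have : (0:ℝ) ≤ 1 / ((n:ℝ) + 1) := by positivity
      linarith
  · intro m n
    have key : ∀ k j : ℕ, k ≤ j → Set.Iic (x + 1 / ((j:ℝ) + 1)) ⊆ Set.Iic (x + 1 / ((k:ℝ) + 1)) := by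
      intro k j hkj
      apply Set.Iic_subset_Iic.mpr
      have : (1:ℝ) / ((j:ℝ) + 1) ≤ 1 / ((k:ℝ) + 1) := by
        apply one_div_le_one_div_of_le (by positivity)
        exact_mod_cast by omega
      linarith
    exact ⟨max m n, key m (max m n) (le_max_left m n), key n (max m n) (le_max_right m n)⟩

private lemma vsel_cdf_rightCont (μ : Measure ℝ) [IsFiniteMeasure μ] (x : ℝ) :
    ContinuousWithinAt (cdf μ) (Set.Ici x) x := by
  rw [ContinuousWithinAt]
  refine tendsto_order.2 ⟨fun c hc => ?_, fun c hc => ?_⟩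
  · filter_upwards [self_mem_nhdsWithin] with y hy
    exact lt_of_lt_of_le hc (vsel_cdf_mono μ hy)
  · have hlt : μ (Set.Iic x) < ENNReal.ofReal c := by
      rw [← vsel_ofReal_cdf μ x]
      exact ENNReal.ofReal_lt_ofReal_iff (lt_of_le_of_lt (vsel_cdf_nonneg μ x) hc) |>.mpr hc
    rw [← vsel_measure_Iic_iInf μ x] at hlt
    obtain ⟨n, hn⟩ := iInf_lt_iff.mp hlt
    have hδ : (0:ℝ) < 1 / (n + 1) := by positivity
    filter_upwards [Ico_mem_nhdsGE_of_mem
      (⟨le_refl x, by linarith⟩ : x ∈ Set.Ico x (x + 1 / (n + 1)))] with y hy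
    have : cdf μ y ≤ cdf μ (x + 1 / (n + 1)) := vsel_cdf_mono μ (le_of_lt hy.2)
    have h2 : cdf μ (x + 1 / (n + 1)) < c := by
      rw [cdf]
      exact ENNReal.toReal_lt_of_lt_ofReal hn
    linarith

private lemma vsel_cdf_tendsto_atBot (μ : Measure ℝ) [IsFiniteMeasure μ] :
    Tendsto (cdf μ) atBot (𝓝 0) := by
  refine tendsto_order.2 ⟨fun c hc => ?_, fun c hc => ?_⟩
  · filter_upwards with y
    exact lt_of_lt_of_le hc (vsel_cdf_nonneg μ y)
  · have h0 : ⨅ n : ℕ, μ (Set.Iic (-(n:ℝ))) = 0 := by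
      rw [← Directed.measure_iInter (fun n => measurableSet_Iic.nullMeasurableSet) ?_
        ⟨0, measure_ne_top μ _⟩]
      · convert measure_empty (μ := μ)
        ext y
        simp only [Set.mem_iInter, Set.mem_Iic, Set.mem_empty_iff_false, iff_false]
        push_neg
        obtain ⟨n, hn⟩ := exists_nat_gt (-y)
        exact ⟨n, by linarith⟩
      · intro m n
        have key : ∀ k j : ℕ, k ≤ j → Set.Iic (-(j:ℝ)) ⊆ Set.Iic (-(k:ℝ)) := by
          intro k j hkj
          apply Set.Iic_subset_Iic.mpr
          simp only [neg_le_neg_iff, Nat.cast_le]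
          exact hkj
        exact ⟨max m n, key m (max m n) (le_max_left m n), key n (max m n) (le_max_right m n)⟩
    have hlt : ⨅ n : ℕ, μ (Set.Iic (-(n:ℝ))) < ENNReal.ofReal c := by
      rw [h0]; exact ENNReal.ofReal_pos.mpr hc
    obtain ⟨n, hn⟩ := iInf_lt_iff.mp hlt
    filter_upwards [eventually_le_atBot (-(n:ℝ))] with y hy
    calc cdf μ y ≤ cdf μ (-(n:ℝ)) := vsel_cdf_mono μ hy
      _ < c := ENNReal.toReal_lt_of_lt_ofReal hn

end VSelHelpers

/-- Vertical selections and absolute continuity: if all sample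
measures have densities `fᵢ ∈ L¹(ℝ)` w.r.t. Lebesgue measure, then the vertical median
selection `ν^θ` (the measure whose cdf is `(1−θ)F⁻ + θF⁺`) has a density `f` with
`minᵢ fᵢ ≤ f ≤ maxᵢ fᵢ` a.e.; in particular if all `fᵢ ∈ L^p` for some `p ∈ [1,∞]`
then `f ∈ L^p` and `‖minᵢ fᵢ‖_p ≤ ‖f‖_p ≤ ‖maxᵢ fᵢ‖_p ≤ ∑ᵢ ‖fᵢ‖_p`. -/
theorem vertical_selection_density_bounds
    {N : ℕ} (hN : 1 ≤ N) {l : Fin N → ℝ} (hl : memSimplex l)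
    {ν : Fin N → Measure ℝ} (hν : ∀ i, ν i ∈ P1 ℝ)
    {f : Fin N → ℝ → ℝ} (hf0 : ∀ i, ∀ x : ℝ, 0 ≤ f i x)
    (hfint : ∀ i, Integrable (f i) volume)
    (hfdens : ∀ i, ν i = volume.withDensity (fun x => ENNReal.ofReal (f i x)))
    {θ : ℝ} (hθ : θ ∈ Set.Icc (0 : ℝ) 1)
    {V : Measure ℝ} (hV : IsProbabilityMeasure V)
    (hVcdf : ∀ x : ℝ, cdf V x =
      (1 - θ) * mMinus l (fun i => cdf (ν i) x) + θ * mPlus l (fun i => cdf (ν i) x)) :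
    ∃ g : ℝ → ℝ,
      V = volume.withDensity (fun x => ENNReal.ofReal (g x)) ∧
      (∀ᵐ x ∂volume, (⨅ i, f i x) ≤ g x ∧ g x ≤ ⨆ i, f i x) ∧
      (∀ p : ℝ≥0∞, 1 ≤ p → (∀ i, MemLp (f i) p volume) →
        MemLp g p volume ∧
        eLpNorm (fun x => ⨅ i, f i x) p volume ≤ eLpNorm g p volume ∧
        eLpNorm g p volume ≤ eLpNorm (fun x => ⨆ i, f i x) p volume ∧
        eLpNorm (fun x => ⨆ i, f i x) p volume ≤ ∑ i, eLpNorm (f i) p volume) :=  by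
  have hne : Nonempty (Fin N) := Fin.pos_iff_nonempty.mp hN
  haveI : IsFiniteMeasure V := by haveI := hV; infer_instance
  have hU : (Finset.univ : Finset (Fin N)).Nonempty := Finset.univ_nonempty
  set G : ℝ → ℝ := fun x => ⨆ i, f i x with hGdef
  set Gm : ℝ → ℝ := fun x => ⨅ i, f i x with hGmdef
  have hbddA : ∀ x : ℝ, BddAbove (Set.range fun i => f i x) :=
    fun x => (Set.finite_range _).bddAbove
  have hbddB : ∀ x : ℝ, BddBelow (Set.range fun i => f i x) :=
    fun x => (Set.finite_range _).bddBelow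
  have hfleG : ∀ (i) (x : ℝ), f i x ≤ G x := fun i x => le_ciSup (hbddA x) i
  have hGmle : ∀ (i) (x : ℝ), Gm x ≤ f i x := fun i x => ciInf_le (hbddB x) i
  have hG0 : ∀ x : ℝ, 0 ≤ G x := fun x => le_trans (hf0 (Classical.arbitrary _) x)
    (hfleG _ x)
  have hGm0 : ∀ x : ℝ, 0 ≤ Gm x := fun x => le_ciInf fun i => hf0 i x
  have hGsum : ∀ x : ℝ, G x ≤ ∑ i, f i x := fun x =>
    ciSup_le fun i => Finset.single_le_sum (fun j _ => hf0 j x) (Finset.mem_univ i)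
  -- measurability of G and Gm
  set φ : Fin N → ℝ → ℝ := fun i => ((hfint i).1).mk (f i) with hφdef
  have hφm : ∀ i, Measurable (φ i) := fun i => ((hfint i).1).stronglyMeasurable_mk.measurable
  have hφeq : ∀ᵐ x ∂(volume : Measure ℝ), ∀ i, f i x = φ i x :=
    ae_all_iff.mpr fun i => ((hfint i).1).ae_eq_mk
  have hsupφ : Measurable (fun x : ℝ => ⨆ i, φ i x) := by
    have h1 : Measurable (Finset.univ.sup' hU φ) :=
      Finset.measurable_sup' hU fun i _ => hφm i
    have h2 : (fun x : ℝ => ⨆ i, φ i x) = Finset.univ.sup' hU φ := by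
      funext x
      rw [← Finset.sup'_univ_eq_ciSup (fun i => φ i x), Finset.sup'_apply]
    rw [h2]
    exact h1
  have hinfφ : Measurable (fun x : ℝ => ⨅ i, φ i x) := by
    have h1 : Measurable (Finset.univ.inf' hU φ) :=
      Finset.inf'_induction hU _ (fun _a ha _b hb => ha.inf hb) fun i _ => hφm i
    have h2 : (fun x : ℝ => ⨅ i, φ i x) = Finset.univ.inf' hU φ := by
      funext x
      rw [← Finset.inf'_univ_eq_ciInf (fun i => φ i x), Finset.inf'_apply]
    rw [h2]
    exact h1
  have hGsm : AEStronglyMeasurable G volume := by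
    refine hsupφ.aestronglyMeasurable.congr ?_
    filter_upwards [hφeq] with x hx
    exact congrArg iSup (funext fun i => (hx i).symm)
  have hGmsm : AEStronglyMeasurable Gm volume := by
    refine hinfφ.aestronglyMeasurable.congr ?_
    filter_upwards [hφeq] with x hx
    exact congrArg iInf (funext fun i => (hx i).symm)
  -- integrability
  have hGint : Integrable G volume := by
    refine (integrable_finset_sum Finset.univ fun i _ => hfint i).mono' hGsm ?_
    filter_upwards with x
    rw [Real.norm_eq_abs, abs_of_nonneg (hG0 x)]
    exact hGsum x
  have hGmint : Integrable Gm volume := by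
    refine (hfint (Classical.arbitrary _)).mono' hGmsm ?_
    filter_upwards with x
    rw [Real.norm_eq_abs, abs_of_nonneg (hGm0 x)]
    exact hGmle _ x
  -- the dominating and dominated measures
  set μmax : Measure ℝ := volume.withDensity (fun x => ENNReal.ofReal (G x)) with hμmax
  set μmin : Measure ℝ := volume.withDensity (fun x => ENNReal.ofReal (Gm x)) with hμmin
  haveI : IsFiniteMeasure μmax :=
    ⟨by rw [hμmax, withDensity_apply _ MeasurableSet.univ, Measure.restrict_univ]
        exact hGint.lintegral_lt_top⟩
  haveI : IsFiniteMeasure μmin :=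
    ⟨by rw [hμmin, withDensity_apply _ MeasurableSet.univ, Measure.restrict_univ]
        exact hGmint.lintegral_lt_top⟩
  -- interval inequalities
  have keyUp : ∀ a b : ℝ, a ≤ b → cdf V b ≤ cdf V a + (μmax (Set.Ioc a b)).toReal := by
    intro a b hab
    have hxi : ∀ i, cdf (ν i) b ≤ cdf (ν i) a + (μmax (Set.Ioc a b)).toReal := by
      intro i
      haveI := (hν i).1
      rw [vsel_cdf_add_Ioc (ν i) hab]
      have hle : ν i (Set.Ioc a b) ≤ μmax (Set.Ioc a b) := by
        rw [hfdens i, hμmax, withDensity_apply _ measurableSet_Ioc,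
          withDensity_apply _ measurableSet_Ioc]
        exact lintegral_mono fun x => ENNReal.ofReal_le_ofReal (hfleG i x)
      have := ENNReal.toReal_mono (measure_ne_top μmax _) hle
      linarith
    have h1 := vsel_mMinus_le_add hN hl hxi
    have h2 := vsel_mPlus_le_add hN hl hxi
    rw [hVcdf a, hVcdf b]
    have hθ0 := hθ.1
    have hθ1 := hθ.2
    nlinarith [mul_le_mul_of_nonneg_left h1 (by linarith : (0:ℝ) ≤ 1 - θ),
      mul_le_mul_of_nonneg_left h2 hθ0]
  have keyLow : ∀ a b : ℝ, a ≤ b → cdf V a + (μmin (Set.Ioc a b)).toReal ≤ cdf V b := by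
    intro a b hab
    have hxi : ∀ i, cdf (ν i) a ≤ cdf (ν i) b + (-(μmin (Set.Ioc a b)).toReal) := by
      intro i
      haveI := (hν i).1
      rw [vsel_cdf_add_Ioc (ν i) hab]
      have hle : μmin (Set.Ioc a b) ≤ ν i (Set.Ioc a b) := by
        rw [hfdens i, hμmin, withDensity_apply _ measurableSet_Ioc,
          withDensity_apply _ measurableSet_Ioc]
        exact lintegral_mono fun x => ENNReal.ofReal_le_ofReal (hGmle i x)
      have := ENNReal.toReal_mono (measure_ne_top (ν i) _) hle
      linarith
    have h1 := vsel_mMinus_le_add hN hl hxi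
    have h2 := vsel_mPlus_le_add hN hl hxi
    rw [hVcdf a, hVcdf b]
    have hθ0 := hθ.1
    have hθ1 := hθ.2
    nlinarith [mul_le_mul_of_nonneg_left h1 (by linarith : (0:ℝ) ≤ 1 - θ),
      mul_le_mul_of_nonneg_left h2 hθ0]
  -- Stieltjes functions for the differences of cdfs
  set Hmax : StieltjesFunction ℝ :=
    { toFun := fun x => cdf μmax x - cdf V x
      mono' := by
        intro a b hab
        have h1 := keyUp a b hab
        have h2 := vsel_cdf_add_Ioc μmax hab
        simp only
        linarith
      right_continuous' := fun x =>
        (vsel_cdf_rightCont μmax x).sub (vsel_cdf_rightCont V x) } with hHmaxdef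
  have hHmaxbot : Tendsto Hmax atBot (𝓝 0) := by
    have h := (vsel_cdf_tendsto_atBot μmax).sub (vsel_cdf_tendsto_atBot V)
    simpa using h
  have hHmax0 : ∀ x, 0 ≤ Hmax x := by
    intro x
    refine le_of_tendsto hHmaxbot ?_
    filter_upwards [eventually_le_atBot x] with y hy
    exact Hmax.mono hy
  have hmax_eq : μmax = V + Hmax.measure := by
    refine MeasureTheory.Measure.ext_of_Iic μmax (V + Hmax.measure) fun a => ?_
    rw [Measure.add_apply, Hmax.measure_Iic hHmaxbot a, sub_zero, ← vsel_ofReal_cdf μmax a,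
      ← vsel_ofReal_cdf V a, ← ENNReal.ofReal_add (vsel_cdf_nonneg V a) (hHmax0 a)]
    congr 1
    show cdf μmax a = cdf V a + (cdf μmax a - cdf V a)
    ring
  have hVleMax : V ≤ μmax := by
    rw [hmax_eq]
    exact Measure.le_add_right le_rfl
  set Hmin : StieltjesFunction ℝ :=
    { toFun := fun x => cdf V x - cdf μmin x
      mono' := by
        intro a b hab
        have h1 := keyLow a b hab
        have h2 := vsel_cdf_add_Ioc μmin hab
        simp only
        linarith
      right_continuous' := fun x =>
        (vsel_cdf_rightCont V x).sub (vsel_cdf_rightCont μmin x) } with hHmindef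
  have hHminbot : Tendsto Hmin atBot (𝓝 0) := by
    have h := (vsel_cdf_tendsto_atBot V).sub (vsel_cdf_tendsto_atBot μmin)
    simpa using h
  have hHmin0 : ∀ x, 0 ≤ Hmin x := by
    intro x
    refine le_of_tendsto hHminbot ?_
    filter_upwards [eventually_le_atBot x] with y hy
    exact Hmin.mono hy
  have hmin_eq : V = μmin + Hmin.measure := by
    refine MeasureTheory.Measure.ext_of_Iic V (μmin + Hmin.measure) fun a => ?_
    rw [Measure.add_apply, Hmin.measure_Iic hHminbot a, sub_zero, ← vsel_ofReal_cdf V a,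
      ← vsel_ofReal_cdf μmin a, ← ENNReal.ofReal_add (vsel_cdf_nonneg μmin a) (hHmin0 a)]
    congr 1
    show cdf V a = cdf μmin a + (cdf V a - cdf μmin a)
    ring
  -- absolute continuity and the density g
  have hVac : V ≪ (volume : Measure ℝ) := by
    refine (Measure.absolutelyContinuous_of_le hVleMax).trans ?_
    rw [hμmax]
    exact withDensity_absolutelyContinuous _ _
  set g : ℝ → ℝ := fun x => (V.rnDeriv volume x).toReal with hgdef
  have hgmeas : Measurable g := (Measure.measurable_rnDeriv V volume).ennreal_toReal
  have hVwd : V = volume.withDensity (fun x => ENNReal.ofReal (g x)) := by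
    conv_lhs => rw [← Measure.withDensity_rnDeriv_eq V volume hVac]
    refine withDensity_congr_ae ?_
    filter_upwards [Measure.rnDeriv_lt_top V volume] with x hx
    exact (ENNReal.ofReal_toReal hx.ne).symm
  have hGae : AEMeasurable (fun x => ENNReal.ofReal (G x)) volume :=
    ENNReal.measurable_ofReal.comp_aemeasurable hGsm.aemeasurable
  have hGmae : AEMeasurable (fun x => ENNReal.ofReal (Gm x)) volume :=
    ENNReal.measurable_ofReal.comp_aemeasurable hGmsm.aemeasurable
  have hub : ∀ᵐ x ∂(volume : Measure ℝ), V.rnDeriv volume x ≤ ENNReal.ofReal (G x) := by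
    have hrd : μmax.rnDeriv volume =ᵐ[volume] fun x => ENNReal.ofReal (G x) := by
      rw [hμmax]
      exact Measure.rnDeriv_withDensity₀ volume hGae
    have hadd : μmax.rnDeriv volume =ᵐ[volume]
        V.rnDeriv volume + Hmax.measure.rnDeriv volume := by
      rw [hmax_eq]
      exact Measure.rnDeriv_add' V Hmax.measure volume
    filter_upwards [hrd, hadd] with x h1 h2
    calc V.rnDeriv volume x
        ≤ V.rnDeriv volume x + Hmax.measure.rnDeriv volume x := le_self_add
      _ = μmax.rnDeriv volume x := h2.symm
      _ = ENNReal.ofReal (G x) := h1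
  have hlb : ∀ᵐ x ∂(volume : Measure ℝ), ENNReal.ofReal (Gm x) ≤ V.rnDeriv volume x := by
    have hrd : μmin.rnDeriv volume =ᵐ[volume] fun x => ENNReal.ofReal (Gm x) := by
      rw [hμmin]
      exact Measure.rnDeriv_withDensity₀ volume hGmae
    have hadd : V.rnDeriv volume =ᵐ[volume]
        μmin.rnDeriv volume + Hmin.measure.rnDeriv volume := by
      rw [hmin_eq]
      exact Measure.rnDeriv_add' μmin Hmin.measure volume
    filter_upwards [hrd, hadd] with x h1 h2
    calc ENNReal.ofReal (Gm x) = μmin.rnDeriv volume x := h1.symm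
      _ ≤ μmin.rnDeriv volume x + Hmin.measure.rnDeriv volume x := le_self_add
      _ = V.rnDeriv volume x := h2.symm
  have hbounds : ∀ᵐ x ∂(volume : Measure ℝ), Gm x ≤ g x ∧ g x ≤ G x := by
    filter_upwards [hub, hlb, Measure.rnDeriv_lt_top V volume] with x h1 h2 h3
    constructor
    · have h4 := ENNReal.toReal_mono h3.ne h2
      rwa [ENNReal.toReal_ofReal (hGm0 x)] at h4
    · have h4 := ENNReal.toReal_mono ENNReal.ofReal_ne_top h1
      rwa [ENNReal.toReal_ofReal (hG0 x)] at h4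
  refine ⟨g, hVwd, hbounds, ?_⟩
  intro p hp hmem
  have hg0 : ∀ x, 0 ≤ g x := fun x => ENNReal.toReal_nonneg
  have hsum0 : ∀ x : ℝ, (0:ℝ) ≤ ∑ i, f i x := fun x =>
    Finset.sum_nonneg fun i _ => hf0 i x
  have hsummem : MemLp (fun x => ∑ i, f i x) p volume :=
    memLp_finsetSum Finset.univ fun i _ => hmem i
  have hGleSumNorm : ∀ᵐ x ∂(volume : Measure ℝ), ‖G x‖ ≤ ‖∑ i, f i x‖ := by
    filter_upwards with x
    rw [Real.norm_eq_abs, Real.norm_eq_abs, abs_of_nonneg (hG0 x), abs_of_nonneg (hsum0 x)]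
    exact hGsum x
  have hGmem : MemLp G p volume := ⟨hGsm, (eLpNorm_mono_ae hGleSumNorm).trans_lt hsummem.2⟩
  have hgG : ∀ᵐ x ∂(volume : Measure ℝ), ‖g x‖ ≤ ‖G x‖ := by
    filter_upwards [hbounds] with x hx
    rw [Real.norm_eq_abs, Real.norm_eq_abs, abs_of_nonneg (hg0 x), abs_of_nonneg (hG0 x)]
    exact hx.2
  have hGmg : ∀ᵐ x ∂(volume : Measure ℝ), ‖Gm x‖ ≤ ‖g x‖ := by
    filter_upwards [hbounds] with x hx
    rw [Real.norm_eq_abs, Real.norm_eq_abs, abs_of_nonneg (hGm0 x), abs_of_nonneg (hg0 x)]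
    exact hx.1
  refine ⟨⟨hgmeas.aestronglyMeasurable, (eLpNorm_mono_ae hgG).trans_lt hGmem.2⟩,
    eLpNorm_mono_ae hGmg, eLpNorm_mono_ae hgG, ?_⟩
  calc eLpNorm G p volume
      ≤ eLpNorm (fun x => ∑ i, f i x) p volume := eLpNorm_mono_ae hGleSumNorm
    _ ≤ ∑ i, eLpNorm (f i) p volume := by
        have h := eLpNorm_sum_le (fun i (_ : i ∈ Finset.univ) => (hmem i).1) hp
        have h2 : (fun x => ∑ i, f i x) = ∑ i, f i := by
          funext x
          simp
        rw [h2]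
        exact h
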